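/- There exists a positive constant $c_5$ (depending only on $g$ and the dimension $d$) such that for all vectors $y, y' \in \mathbb{R}^d$, $\big|K(|y'|)\,y' - K(|y|)\,y\big| \le c_5\,|y' - y|$. -/

import Mathlib

/-! Since all exponents are nonnegative, `g` is nondecreasing on `[0, ∞)` and bounded below by
`g 0 = a₀ > 0`. Hence `s ↦ s g(s)` grows at rate at least `a₀`, so its inverse `s(ξ)` is
nondecreasing and `1/a₀`-Lipschitz, while `K(ξ) ξ = s(ξ)` and `0 ≤ K ≤ 1/a₀`. Writing
`K(|y'|) y' - K(|y|) y = K(|y'|) (y' - y) + (K(|y'|) - K(|y|)) y`, the first term is at most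
`|y' - y| / a₀`, and for `|y| ≤ |y'|` the scalar in the second term times `|y|` is
`(s(|y'|) - s(|y|)) - K(|y'|) (|y'| - |y|)`, a difference of two numbers in `[0, (|y'| - |y|)/a₀]`. -/

open Set

section GeneralizedPolynomial

variable {ι : Type*} [Fintype ι] {c α : ι → ℝ}

theorem monotoneOn_sum_mul_rpow (hc : ∀ i, 0 ≤ c i) (hα : ∀ i, 0 ≤ α i) :
    MonotoneOn (fun s : ℝ => ∑ i, c i * s ^ α i) (Ici 0) := fun _ hs _ _ hst =>
  Finset.sum_le_sum fun i _ =>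
    mul_le_mul_of_nonneg_left (Real.rpow_le_rpow hs hst (hα i)) (hc i)

theorem le_sum_mul_rpow_of_exponent_eq_zero (hc : ∀ i, 0 ≤ c i) {i₀ : ι} (hα : α i₀ = 0)
    {s : ℝ} (hs : 0 ≤ s) : c i₀ ≤ ∑ i, c i * s ^ α i := by
  simpa [hα] using Finset.single_le_sum (f := fun i => c i * s ^ α i)
    (fun i _ => mul_nonneg (hc i) (Real.rpow_nonneg hs _)) (Finset.mem_univ i₀)

end GeneralizedPolynomial

section InverseOfMulSelf

def SolvesMulSelf (g σ : ℝ → ℝ) : Prop :=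
  ∀ ξ, 0 ≤ ξ → 0 ≤ σ ξ ∧ σ ξ * g (σ ξ) = ξ

variable {g σ : ℝ → ℝ} {m : ℝ}

theorem mul_sub_le_mul_apply_sub_mul_apply (hgm : ∀ s, 0 ≤ s → m ≤ g s)
    (hg : MonotoneOn g (Ici 0)) {s t : ℝ} (hs : 0 ≤ s) (hst : s ≤ t) :
    m * (t - s) ≤ t * g t - s * g s := by
  have ht : 0 ≤ t := hs.trans hst
  have h₁ : s * g s ≤ s * g t := mul_le_mul_of_nonneg_left (hg hs ht hst) hs
  have h₂ : m * (t - s) ≤ g t * (t - s) :=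
    mul_le_mul_of_nonneg_right (hgm t ht) (sub_nonneg.mpr hst)
  nlinarith

theorem SolvesMulSelf.monotoneOn (hσ : SolvesMulSelf g σ) (hm : 0 < m)
    (hgm : ∀ s, 0 ≤ s → m ≤ g s) (hg : MonotoneOn g (Ici 0)) : MonotoneOn σ (Ici 0) := by
  intro ξ hξ ξ' hξ' hle
  by_contra! hlt
  have := mul_sub_le_mul_apply_sub_mul_apply hgm hg (hσ ξ' hξ').1 hlt.le
  rw [(hσ ξ hξ).2, (hσ ξ' hξ').2] at this
  nlinarith

theorem SolvesMulSelf.mul_sub_le (hσ : SolvesMulSelf g σ) (hm : 0 < m)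
    (hgm : ∀ s, 0 ≤ s → m ≤ g s) (hg : MonotoneOn g (Ici 0)) {ξ ξ' : ℝ} (hξ : 0 ≤ ξ)
    (hle : ξ ≤ ξ') : m * (σ ξ' - σ ξ) ≤ ξ' - ξ := by
  have hξ' : 0 ≤ ξ' := hξ.trans hle
  have := mul_sub_le_mul_apply_sub_mul_apply hgm hg (hσ ξ hξ).1
    (hσ.monotoneOn hm hgm hg hξ hξ' hle)
  rwa [(hσ ξ hξ).2, (hσ ξ' hξ').2] at this

theorem SolvesMulSelf.one_div_mul_self (hσ : SolvesMulSelf g σ) {ξ : ℝ} (hξ : 0 ≤ ξ)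
    (hg : g (σ ξ) ≠ 0) : 1 / g (σ ξ) * ξ = σ ξ := by
  calc 1 / g (σ ξ) * ξ = 1 / g (σ ξ) * (σ ξ * g (σ ξ)) := by rw [(hσ ξ hξ).2]
    _ = σ ξ := by field_simp

end InverseOfMulSelf

section RadialMap

variable {E : Type*} [SeminormedAddCommGroup E] [NormedSpace ℝ E]
  {k σ : ℝ → ℝ} {L : ℝ}

theorem abs_sub_mul_le_of_mul_self_eq (hk0 : ∀ ξ, 0 ≤ ξ → 0 ≤ k ξ)
    (hkL : ∀ ξ, 0 ≤ ξ → k ξ ≤ L) (hkσ : ∀ ξ, 0 ≤ ξ → k ξ * ξ = σ ξ)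
    (hσ : MonotoneOn σ (Ici 0)) (hσL : ∀ ξ ξ', 0 ≤ ξ → ξ ≤ ξ' → σ ξ' - σ ξ ≤ L * (ξ' - ξ))
    {ξ ξ' : ℝ} (hξ : 0 ≤ ξ) (hle : ξ ≤ ξ') : |(k ξ' - k ξ) * ξ| ≤ L * (ξ' - ξ) := by
  have hξ' : 0 ≤ ξ' := hξ.trans hle
  have hsplit : (k ξ' - k ξ) * ξ = (σ ξ' - σ ξ) - k ξ' * (ξ' - ξ) := by
    rw [← hkσ ξ hξ, ← hkσ ξ' hξ']; ring
  rw [hsplit]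
  exact abs_sub_le_of_nonneg_of_le (sub_nonneg.mpr (hσ hξ hξ' hle)) (hσL ξ ξ' hξ hle)
    (mul_nonneg (hk0 ξ' hξ') (sub_nonneg.mpr hle))
    (mul_le_mul_of_nonneg_right (hkL ξ' hξ') (sub_nonneg.mpr hle))

theorem norm_smul_sub_smul_le_of_norm_le (hk0 : ∀ ξ, 0 ≤ ξ → 0 ≤ k ξ)
    (hkL : ∀ ξ, 0 ≤ ξ → k ξ ≤ L) (hkσ : ∀ ξ, 0 ≤ ξ → k ξ * ξ = σ ξ)
    (hσ : MonotoneOn σ (Ici 0)) (hσL : ∀ ξ ξ', 0 ≤ ξ → ξ ≤ ξ' → σ ξ' - σ ξ ≤ L * (ξ' - ξ))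
    {y y' : E} (hle : ‖y‖ ≤ ‖y'‖) : ‖k ‖y'‖ • y' - k ‖y‖ • y‖ ≤ 2 * L * ‖y' - y‖ := by
  have hnorm : ‖y'‖ - ‖y‖ ≤ ‖y' - y‖ := (le_abs_self _).trans (abs_norm_sub_norm_le y' y)
  have hL : 0 ≤ L := (hk0 0 le_rfl).trans (hkL 0 le_rfl)
  have hfirst : ‖k ‖y'‖ • (y' - y)‖ ≤ L * ‖y' - y‖ := by
    rw [norm_smul, Real.norm_of_nonneg (hk0 _ (norm_nonneg _))]
    exact mul_le_mul_of_nonneg_right (hkL _ (norm_nonneg _)) (norm_nonneg _)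
  have hsecond : ‖(k ‖y'‖ - k ‖y‖) • y‖ ≤ L * ‖y' - y‖ := by
    rw [norm_smul, Real.norm_eq_abs, ← abs_norm y, ← abs_mul, abs_norm]
    exact (abs_sub_mul_le_of_mul_self_eq hk0 hkL hkσ hσ hσL (norm_nonneg y) hle).trans
      (mul_le_mul_of_nonneg_left hnorm hL)
  calc ‖k ‖y'‖ • y' - k ‖y‖ • y‖
      = ‖k ‖y'‖ • (y' - y) + (k ‖y'‖ - k ‖y‖) • y‖ := by
        rw [smul_sub, sub_smul, sub_add_sub_cancel]
    _ ≤ L * ‖y' - y‖ + L * ‖y' - y‖ := (norm_add_le _ _).trans (add_le_add hfirst hsecond)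
    _ = 2 * L * ‖y' - y‖ := by ring

theorem norm_smul_sub_smul_le (hk0 : ∀ ξ, 0 ≤ ξ → 0 ≤ k ξ)
    (hkL : ∀ ξ, 0 ≤ ξ → k ξ ≤ L) (hkσ : ∀ ξ, 0 ≤ ξ → k ξ * ξ = σ ξ)
    (hσ : MonotoneOn σ (Ici 0)) (hσL : ∀ ξ ξ', 0 ≤ ξ → ξ ≤ ξ' → σ ξ' - σ ξ ≤ L * (ξ' - ξ))
    (y y' : E) : ‖k ‖y'‖ • y' - k ‖y‖ • y‖ ≤ 2 * L * ‖y' - y‖ := by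
  rcases le_total ‖y‖ ‖y'‖ with hle | hle
  · exact norm_smul_sub_smul_le_of_norm_le hk0 hkL hkσ hσ hσL hle
  · rw [norm_sub_rev, norm_sub_rev y']
    exact norm_smul_sub_smul_le_of_norm_le hk0 hkL hkσ hσ hσL hle

end RadialMap

theorem stmt9_general
    (N : ℕ)
    (α : Fin (N + 1) → ℝ) (hα0 : α 0 = 0) (hαmono : StrictMono α)
    (c : Fin (N + 1) → ℝ) (hc : ∀ i, 0 ≤ c i) (hc0 : 0 < c 0)
    (g : ℝ → ℝ) (hg : ∀ s : ℝ, 0 ≤ s → g s = ∑ i, c i * s ^ (α i))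
    (sfun : ℝ → ℝ)
    (hsfun : ∀ ξ : ℝ, 0 ≤ ξ → 0 ≤ sfun ξ ∧ sfun ξ * g (sfun ξ) = ξ)
    (K : ℝ → ℝ) (hK : ∀ ξ : ℝ, 0 ≤ ξ → K ξ = 1 / g (sfun ξ))
    (d : ℕ) :
    ∃ c₅ : ℝ, 0 < c₅ ∧ ∀ y y' : EuclideanSpace ℝ (Fin d),
      ‖K ‖y'‖ • y' - K ‖y‖ • y‖ ≤ c₅ * ‖y' - y‖ := by
  have hα : ∀ i, 0 ≤ α i := fun i => hα0 ▸ hαmono.monotone (Fin.zero_le i)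
  have hgm : ∀ s, 0 ≤ s → c 0 ≤ g s := fun s hs =>
    hg s hs ▸ le_sum_mul_rpow_of_exponent_eq_zero hc hα0 hs
  have hgmono : MonotoneOn g (Ici 0) :=
    (monotoneOn_sum_mul_rpow hc hα).congr fun s hs => (hg s hs).symm
  have hσ : SolvesMulSelf g sfun := hsfun
  have hgpos : ∀ ξ, 0 ≤ ξ → 0 < g (sfun ξ) := fun ξ hξ => hc0.trans_le (hgm _ (hσ ξ hξ).1)
  refine ⟨2 * (1 / c 0), by positivity, norm_smul_sub_smul_le (σ := sfun) ?_ ?_ ?_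
    (hσ.monotoneOn hc0 hgm hgmono) ?_⟩
  · exact fun ξ hξ => hK ξ hξ ▸ (one_div_pos.mpr (hgpos ξ hξ)).le
  · exact fun ξ hξ => hK ξ hξ ▸ one_div_le_one_div_of_le hc0 (hgm _ (hσ ξ hξ).1)
  · exact fun ξ hξ => hK ξ hξ ▸ hσ.one_div_mul_self hξ (hgpos ξ hξ).ne'
  · intro ξ ξ' hξ hle
    rw [one_div_mul_eq_div, le_div_iff₀' hc0]
    exact hσ.mul_sub_le hc0 hgm hgmono hξ hle

/-- Lipschitz continuity: there is `c₅ > 0` (depending only on `g` and the dimension `d`)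
such that `|K(|y'|) y' - K(|y|) y| ≤ c₅ |y' - y|` for all `y, y' ∈ ℝ^d`. -/
theorem stmt9
    (N : ℕ) (hN : 1 ≤ N)
    (α : Fin (N + 1) → ℝ) (hα0 : α 0 = 0) (hαmono : StrictMono α)
    (c : Fin (N + 1) → ℝ) (hc : ∀ i, 0 ≤ c i) (hc0 : 0 < c 0) (hcN : 0 < c (Fin.last N))
    (g : ℝ → ℝ) (hg : ∀ s : ℝ, 0 ≤ s → g s = ∑ i, c i * s ^ (α i))
    (sfun : ℝ → ℝ)
    (hsfun : ∀ ξ : ℝ, 0 ≤ ξ → 0 ≤ sfun ξ ∧ sfun ξ * g (sfun ξ) = ξ)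
    (K : ℝ → ℝ) (hK : ∀ ξ : ℝ, 0 ≤ ξ → K ξ = 1 / g (sfun ξ))
    (d : ℕ) :
    ∃ c₅ : ℝ, 0 < c₅ ∧ ∀ y y' : EuclideanSpace ℝ (Fin d),
      ‖K ‖y'‖ • y' - K ‖y‖ • y‖ ≤ c₅ * ‖y' - y‖ :=
  stmt9_general N α hα0 hαmono c hc hc0 g hg sfun hsfun K hK d
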